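/- arXiv:2603.28468 — 2 statements merged into one kernel-verified Lean document; each statement's English description precedes it below -/
import Mathlib

section
/- Let d ∈ {2,3,11} and suppose z = [a₀; a₁, a₂, …] with all a_n ∈ ℤ[ω_d] is a geodesic continued fraction expansion (finite or infinite). Then for every n ≥ 1 for which the relevant partial quotients exist: if |a_n| = √3, a_{n+1} = −conj(a_n) and a_{n+2} = a_n, then a_{n+3} ≠ −conj(a_n). -/
/-!
If `|α| = √3` and `β = −conj α` then `αβ = −3`, and four steps of the convergent recurrence with
partial quotients `α, β, α, β` give `p_{n+3} = p_{n−1} − β p_{n−2}`, and likewise for `q`.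
So `p_{n−1}/q_{n−1} → p_{n−2}/q_{n−2} → (p_{n−1} − (β+1) p_{n−2})/(q_{n−1} − (β+1) q_{n−2}) →
p_{n+3}/q_{n+3}` is a walk in `E_d`, every determinant along it being `±1`. It replaces the four
edges of the convergent walk between `p_{n−1}/q_{n−1}` and `p_{n+3}/q_{n+3}` by three, contradicting
geodesicity.
-/

/-- `ω_d`: the generator of the ring of integers of `ℚ(√(-d))`. -/
noncomputable def omegaD (d : ℕ) : ℂ :=
  if d % 4 = 3 then (1 + Complex.I * Real.sqrt d) / 2 else Complex.I * Real.sqrt d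

/-- The ring of integers `ℤ[ω_d]` of `ℚ(√(-d))`, as a subset of `ℂ`. -/
def ringInt (d : ℕ) : Set ℂ := {z | ∃ a b : ℤ, z = (a : ℂ) + (b : ℂ) * omegaD d}

/-- `p` and `q` are coprime in `ℤ[ω_d]`. -/
def CoprimeIn (d : ℕ) (p q : ℂ) : Prop :=
  ∃ u v : ℂ, u ∈ ringInt d ∧ v ∈ ringInt d ∧ u * p + v * q = 1

/-- `x` is an element of the field `ℚ(√(-d)) ⊆ ℂ`. -/
def inK (d : ℕ) (x : ℂ) : Prop :=
  ∃ p q : ℂ, p ∈ ringInt d ∧ q ∈ ringInt d ∧ q ≠ 0 ∧ x = p / q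

/-- The point `p/q` of `ℂ ∪ {∞}`, with `p/0 = ∞`. -/
noncomputable def divC (p q : ℂ) : OnePoint ℂ :=
  if q = 0 then OnePoint.infty else ((p / q : ℂ) : OnePoint ℂ)

/-- Two points of `ℚ(√(-d)) ∪ {∞}` are Farey neighbours (joined by an edge of
the Farey graph `E_d`) if they have coprime representations `p₁/q₁`, `p₂/q₂`
with `|p₁q₂ − p₂q₁| = 1`. -/
def FareyAdj (d : ℕ) (x y : OnePoint ℂ) : Prop :=
  ∃ p₁ q₁ p₂ q₂ : ℂ, p₁ ∈ ringInt d ∧ q₁ ∈ ringInt d ∧ p₂ ∈ ringInt d ∧ q₂ ∈ ringInt d ∧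
    CoprimeIn d p₁ q₁ ∧ CoprimeIn d p₂ q₂ ∧ x = divC p₁ q₁ ∧ y = divC p₂ q₂ ∧
    ‖p₁ * q₂ - p₂ * q₁‖ = 1

/-- `f 0 → f 1 → ⋯ → f n` is a walk (of length `n`) in the Farey graph `E_d`. -/
def IsWalk (d n : ℕ) (f : ℕ → OnePoint ℂ) : Prop := ∀ k, k < n → FareyAdj d (f k) (f (k + 1))

/-- `f 0 → ⋯ → f n` is a geodesic path in `E_d`: a walk of minimal length
among all walks with the same endpoints. -/
def IsGeodesicWalk (d n : ℕ) (f : ℕ → OnePoint ℂ) : Prop :=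
  IsWalk d n f ∧ ∀ (m : ℕ) (g : ℕ → OnePoint ℂ), IsWalk d m g → g 0 = f 0 → g m = f n → n ≤ m

/-- Numerators of the convergents of `[a₁, a₂, …]` (`a 0` is unused):
`p₀ = 0`, `p₁ = 1`, `p_k = a_k p_{k−1} + p_{k−2}`. -/
noncomputable def cfP (a : ℕ → ℂ) : ℕ → ℂ
  | 0 => 0
  | 1 => 1
  | (k + 2) => a (k + 2) * cfP a (k + 1) + cfP a k

/-- Denominators of the convergents of `[a₁, a₂, …]`:
`q₀ = 1`, `q₁ = a₁`, `q_k = a_k q_{k−1} + q_{k−2}`. -/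
noncomputable def cfQ (a : ℕ → ℂ) : ℕ → ℂ
  | 0 => 1
  | 1 => a 1
  | (k + 2) => a (k + 2) * cfQ a (k + 1) + cfQ a k

/-- The walk `∞ → p₀/q₀ = 0 → p₁/q₁ → ⋯` along the convergents of `[a₁, a₂, …]`. -/
noncomputable def cfWalk (a : ℕ → ℂ) : ℕ → OnePoint ℂ :=
  fun k => if k = 0 then OnePoint.infty else divC (cfP a (k - 1)) (cfQ a (k - 1))

/-- Numerators of the convergents of `[a₀; a₁, a₂, …]`:
`p₀ = a₀`, `p₁ = a₁a₀ + 1` (with `p₋₁ = 1`), `p_k = a_k p_{k−1} + p_{k−2}`. -/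
noncomputable def cfP0 (a : ℕ → ℂ) : ℕ → ℂ
  | 0 => a 0
  | 1 => a 1 * a 0 + 1
  | (k + 2) => a (k + 2) * cfP0 a (k + 1) + cfP0 a k

/-- Denominators of the convergents of `[a₀; a₁, a₂, …]`:
`q₀ = 1`, `q₁ = a₁` (with `q₋₁ = 0`), `q_k = a_k q_{k−1} + q_{k−2}`. -/
noncomputable def cfQ0 (a : ℕ → ℂ) : ℕ → ℂ
  | 0 => 1
  | 1 => a 1
  | (k + 2) => a (k + 2) * cfQ0 a (k + 1) + cfQ0 a k

/-- The walk `∞ → p₀/q₀ → p₁/q₁ → ⋯` along the convergents of `[a₀; a₁, …]`. -/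
noncomputable def cfWalk0 (a : ℕ → ℂ) : ℕ → OnePoint ℂ :=
  fun k => if k = 0 then OnePoint.infty else divC (cfP0 a (k - 1)) (cfQ0 a (k - 1))

/-- A unit of the ring `ℤ[ω_d]`. -/
def IsUnitIn (d : ℕ) (ζ : ℂ) : Prop := ζ ∈ ringInt d ∧ ∃ η ∈ ringInt d, ζ * η = 1

lemma omegaD_sq_eq (d : ℕ) : ∃ e f : ℤ, omegaD d ^ 2 = e + f * omegaD d := by
  have hsqrt : ((Real.sqrt d : ℝ) : ℂ) ^ 2 = d := by
    rw [← Complex.ofReal_pow, Real.sq_sqrt d.cast_nonneg, Complex.ofReal_natCast]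
  by_cases hd : d % 4 = 3
  · obtain ⟨k, hk⟩ : ∃ k : ℕ, (d : ℂ) = 4 * k + 3 := ⟨d / 4, by norm_cast; omega⟩
    refine ⟨-(k + 1), 1, ?_⟩
    simp only [omegaD, if_pos hd]
    push_cast
    linear_combination ((Real.sqrt d : ℝ) : ℂ) ^ 2 / 4 * Complex.I_sq - hsqrt / 4 - hk / 4
  · refine ⟨-d, 0, ?_⟩
    simp only [omegaD, if_neg hd]
    push_cast
    linear_combination ((Real.sqrt d : ℝ) : ℂ) ^ 2 * Complex.I_sq - hsqrt

def ringIntSubring (d : ℕ) : Subring ℂ where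
  carrier := ringInt d
  zero_mem' := ⟨0, 0, by simp⟩
  one_mem' := ⟨1, 0, by simp⟩
  add_mem' := by
    rintro _ _ ⟨a, b, rfl⟩ ⟨c, e, rfl⟩
    exact ⟨a + c, b + e, by push_cast; ring⟩
  neg_mem' := by
    rintro _ ⟨a, b, rfl⟩
    exact ⟨-a, -b, by push_cast; ring⟩
  mul_mem' := by
    rintro _ _ ⟨a, b, rfl⟩ ⟨c, g, rfl⟩
    obtain ⟨e, f, hsq⟩ := omegaD_sq_eq d
    exact ⟨a * c + b * g * e, a * g + b * c + b * g * f, by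
      push_cast; linear_combination ((b : ℂ) * (g : ℂ)) * hsq⟩

lemma fareyAdj_divC_of_det_sq {d : ℕ} {p q p' q' : ℂ} (hp : p ∈ ringInt d) (hq : q ∈ ringInt d)
    (hp' : p' ∈ ringInt d) (hq' : q' ∈ ringInt d) (hdet : (p * q' - p' * q) ^ 2 = 1) :
    FareyAdj d (divC p q) (divC p' q') := by
  set R := ringIntSubring d
  set D := p * q' - p' * q
  have hD : D ∈ R := sub_mem (mul_mem hp hq') (mul_mem hp' hq)
  refine ⟨p, q, p', q', hp, hq, hp', hq', ?_, ?_, rfl, rfl, ?_⟩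
  · exact ⟨D * q', -(D * p'), mul_mem hD hq', neg_mem (mul_mem hD hp'),
      by linear_combination hdet⟩
  · exact ⟨-(D * q), D * p, neg_mem (mul_mem hD hq), mul_mem hD hp, by linear_combination hdet⟩
  · exact (pow_eq_one_iff_of_nonneg (norm_nonneg D) two_ne_zero).mp
      (by rw [← norm_pow, hdet, norm_one])

lemma IsWalk.mono {d m n : ℕ} {f : ℕ → OnePoint ℂ} (hf : IsWalk d n f) (hmn : m ≤ n) :
    IsWalk d m f :=
  fun k hk => hf k (hk.trans_le hmn)

lemma IsWalk.update_succ {d n : ℕ} {f : ℕ → OnePoint ℂ} {y : OnePoint ℂ} (hf : IsWalk d n f)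
    (hy : FareyAdj d (f n) y) : IsWalk d (n + 1) (Function.update f (n + 1) y) := by
  intro k hk
  rcases Nat.lt_succ_iff_lt_or_eq.mp hk with hk | rfl
  · rw [Function.update_of_ne (by omega), Function.update_of_ne (by omega)]
    exact hf k hk
  · rwa [Function.update_of_ne (by omega), Function.update_self]

lemma IsWalk.exists_extend_sub_mul {d n : ℕ} {f : ℕ → OnePoint ℂ} {P Q p q b : ℂ}
    (hf : IsWalk d n f) (hfn : f n = divC P Q) (hP : P ∈ ringInt d) (hQ : Q ∈ ringInt d)
    (hp : p ∈ ringInt d) (hq : q ∈ ringInt d) (hb : b ∈ ringInt d)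
    (hdet : (P * q - p * Q) ^ 2 = 1) :
    ∃ g, IsWalk d (n + 3) g ∧ g 0 = f 0 ∧ g (n + 3) = divC (P - b * p) (Q - b * q) := by
  set R := ringIntSubring d
  have hb1 : b + 1 ∈ R := add_mem hb (one_mem R)
  have hR : P - (b + 1) * p ∈ R := sub_mem hP (mul_mem hb1 hp)
  have hS : Q - (b + 1) * q ∈ R := sub_mem hQ (mul_mem hb1 hq)
  have hR' : P - b * p ∈ R := sub_mem hP (mul_mem hb hp)
  have hS' : Q - b * q ∈ R := sub_mem hQ (mul_mem hb hq)
  -- All three determinants are `±(P q - p Q)`.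
  have hW1 := hf.update_succ (y := divC p q) (by
    rw [hfn]; exact fareyAdj_divC_of_det_sq hP hQ hp hq hdet)
  have hW2 := hW1.update_succ (y := divC (P - (b + 1) * p) (Q - (b + 1) * q)) (by
    rw [Function.update_self]
    exact fareyAdj_divC_of_det_sq hp hq hR hS (by linear_combination hdet))
  have hW3 := hW2.update_succ (y := divC (P - b * p) (Q - b * q)) (by
    rw [Function.update_self]
    exact fareyAdj_divC_of_det_sq hR hS hR' hS' (by linear_combination hdet))
  exact ⟨_, hW3, by simp, by simp⟩

section Convergents

variable (a : ℕ → ℂ)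

/-- The convergent numerators shifted by one, so that `p₋₁ = 1` sits at index `0`. -/
noncomputable def convNum (a : ℕ → ℂ) : ℕ → ℂ
  | 0 => 1
  | 1 => a 0
  | (k + 2) => a (k + 1) * convNum a (k + 1) + convNum a k

/-- The convergent denominators shifted by one, so that `q₋₁ = 0` sits at index `0`. -/
noncomputable def convDen (a : ℕ → ℂ) : ℕ → ℂ
  | 0 => 0
  | 1 => 1
  | (k + 2) => a (k + 1) * convDen a (k + 1) + convDen a k

lemma convNum_succ : ∀ k, convNum a (k + 1) = cfP0 a k
  | 0 => rfl
  | 1 => rfl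
  | (k + 2) => by
    rw [convNum, convNum_succ (k + 1), convNum_succ k]
    rfl

lemma convDen_succ : ∀ k, convDen a (k + 1) = cfQ0 a k
  | 0 => rfl
  | 1 => by simp [convDen, cfQ0]
  | (k + 2) => by
    rw [convDen, convDen_succ (k + 1), convDen_succ k]
    rfl

lemma cfWalk0_eq_divC : ∀ k, cfWalk0 a k = divC (convNum a k) (convDen a k)
  | 0 => by simp [cfWalk0, divC, convDen]
  | (k + 1) => by simp [cfWalk0, convNum_succ, convDen_succ]

lemma convNum_mul_convDen_sub (k : ℕ) :
    convNum a (k + 1) * convDen a k - convNum a k * convDen a (k + 1) = -(-1) ^ k := by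
  induction k with
  | zero => simp [convNum, convDen]
  | succ k ih =>
    rw [convNum, convDen]
    linear_combination -ih

lemma convNum_mul_convDen_sub_sq (k : ℕ) :
    (convNum a (k + 1) * convDen a k - convNum a k * convDen a (k + 1)) ^ 2 = 1 := by
  rw [convNum_mul_convDen_sub, neg_sq, ← pow_mul, pow_mul', neg_one_sq, one_pow]

lemma convNum_mem (R : Subring ℂ) :
    ∀ k, (∀ j < k, a j ∈ R) → convNum a k ∈ R
  | 0, _ => one_mem R
  | 1, ha => ha 0 one_pos
  | (k + 2), ha => add_mem (mul_mem (ha (k + 1) (by omega))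
      (convNum_mem R (k + 1) fun j hj => ha j (by omega)))
      (convNum_mem R k fun j hj => ha j (by omega))

lemma convDen_mem (R : Subring ℂ) :
    ∀ k, (∀ j < k, a j ∈ R) → convDen a k ∈ R
  | 0, _ => zero_mem R
  | 1, _ => one_mem R
  | (k + 2), ha => add_mem (mul_mem (ha (k + 1) (by omega))
      (convDen_mem R (k + 1) fun j hj => ha j (by omega)))
      (convDen_mem R k fun j hj => ha j (by omega))

end Convergents

lemma add_five_eq_sub_of_mul_eq_neg_three {a s : ℕ → ℂ}
    (hs : ∀ j, s (j + 2) = a (j + 1) * s (j + 1) + s j) {m : ℕ}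
    (hαβ : a (m + 1) * a (m + 2) = -3) (h3 : a (m + 3) = a (m + 1)) (h4 : a (m + 4) = a (m + 2)) :
    s (m + 5) = s (m + 1) - a (m + 2) * s m := by
  rw [hs (m + 3), hs (m + 2), hs (m + 1), hs m, h3, h4]
  linear_combination (a (m + 1) * a (m + 2) * s (m + 1) + a (m + 2) * s m) * hαβ

lemma mul_neg_conj_of_norm_eq_sqrt_three {α : ℂ} (hα : ‖α‖ = Real.sqrt 3) :
    α * -(starRingEnd ℂ) α = -3 := by
  rw [mul_neg, Complex.mul_conj, ← Complex.sq_norm, hα, Real.sq_sqrt (by norm_num)]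
  norm_num

theorem geodesic_expansion_sqrt3_restriction_general (d : ℕ)
    (N : ℕ) (a : ℕ → ℂ) (ha : ∀ k ≤ N, a k ∈ ringInt d)
    (hgeo : ∀ n ≤ N, IsGeodesicWalk d (n + 1) (cfWalk0 a)) :
    ∀ n, 1 ≤ n → n + 3 ≤ N →
      ‖a n‖ = Real.sqrt 3 →
      a (n + 1) = -(starRingEnd ℂ) (a n) →
      a (n + 2) = a n →
      a (n + 3) ≠ -(starRingEnd ℂ) (a n) := by
  intro n hn hN habs h1 h2 h3
  obtain ⟨m, rfl⟩ : ∃ m, n = m + 1 := ⟨n - 1, by omega⟩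
  have hαβ : a (m + 1) * a (m + 2) = -3 := h1 ▸ mul_neg_conj_of_norm_eq_sqrt_three habs
  have h4 : a (m + 4) = a (m + 2) := h3.trans h1.symm
  have hnum := add_five_eq_sub_of_mul_eq_neg_three (s := convNum a) (fun _ ↦ rfl) hαβ h2 h4
  have hden := add_five_eq_sub_of_mul_eq_neg_three (s := convDen a) (fun _ ↦ rfl) hαβ h2 h4
  have haR : ∀ j < m + 1, a j ∈ ringIntSubring d := fun j hj ↦ ha j (by omega)
  have haR' : ∀ j < m, a j ∈ ringIntSubring d := fun j hj ↦ haR j (by omega)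
  have hgeo' := hgeo (m + 4) (by omega)
  obtain ⟨g, hg, hg0, hgend⟩ := (hgeo'.1.mono (by omega)).exists_extend_sub_mul
    (cfWalk0_eq_divC a (m + 1)) (convNum_mem a _ _ haR) (convDen_mem a _ _ haR)
    (convNum_mem a _ _ haR') (convDen_mem a _ _ haR') (ha (m + 2) (by omega))
    (convNum_mul_convDen_sub_sq a m)
  have hshort := hgeo'.2 (m + 1 + 3) g hg hg0 (by rw [hgend, cfWalk0_eq_divC, hnum, hden])
  omega

/-- Let `d ∈ {2,3,11}` and let `[a₀; a₁, …, a_N]` with all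
`a_k ∈ ℤ[ω_d]` be a geodesic continued fraction expansion. Then for every
`n ≥ 1` for which the relevant partial quotients exist: if `|a_n| = √3`,
`a_{n+1} = −conj(a_n)` and `a_{n+2} = a_n`, then `a_{n+3} ≠ −conj(a_n)`. -/
theorem geodesic_expansion_sqrt3_restriction (d : ℕ) (hd : d ∈ ({2, 3, 11} : Set ℕ))
    (N : ℕ) (a : ℕ → ℂ) (ha : ∀ k ≤ N, a k ∈ ringInt d)
    (hgeo : ∀ n ≤ N, IsGeodesicWalk d (n + 1) (cfWalk0 a)) :
    ∀ n, 1 ≤ n → n + 3 ≤ N →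
      ‖a n‖ = Real.sqrt 3 →
      a (n + 1) = -(starRingEnd ℂ) (a n) →
      a (n + 2) = a n →
      a (n + 3) ≠ -(starRingEnd ℂ) (a n) :=
  geodesic_expansion_sqrt3_restriction_general d N a ha hgeo
end

section
/- Let a₁, a₂, a ∈ ℂ and ρ₁, ρ₂, ρ > 0 with ρ₁ > ρ₂. Assume |a₁ − a₂| ≤ (2 − √2)·ρ₁, that the first two spheres do not overlap, i.e., |a₁ − a₂| ≥ 2√(ρ₁ρ₂), that the third sphere is tangent to the second, i.e., |a₂ − a| = 2√(ρ₂ρ), and that either (a, ρ) = (a₁, ρ₁) or |a₁ − a| ≥ 2√(ρ₁ρ). Then |a − a₁| + ρ ≤ ρ₁; equivalently, the closed disk in ℂ of radius ρ centered at a is contained in the closed disk of radius ρ₁ centered at a₁ (the vertical projection of the sphere of radius ρ tangent to ℂ at a lies inside the projection of the sphere of radius ρ₁ tangent to ℂ at a₁). -/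
/-!
With `x = √ρ₁`, `y = √ρ₂`, `z = √ρ`, the triangle inequality through `a₂` reduces the claim to
`(2 - √2) x² + 2yz + z² ≤ x²`. Separation of the first two spheres gives `2y ≤ (2 - √2) x`, and
separation of the third sphere from the first then forces `z ≤ (√2 - 1) x`; at these extreme
values the left-hand side equals `x²` exactly.
-/

lemma le_sqrt_two_sub_one_mul {x y z : ℝ} (hx : 0 < x) (hz : 0 ≤ z)
    (hxy : 2 * x * y ≤ (2 - √2) * x ^ 2) (hxz : 2 * x * z ≤ (2 - √2) * x ^ 2 + 2 * y * z) :
    z ≤ (√2 - 1) * x := by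
  have hs : √2 * √2 = 2 := Real.mul_self_sqrt zero_le_two
  have hyx : 2 * y ≤ (2 - √2) * x := le_of_mul_le_mul_left (by linarith) hx
  have : √2 * x * z ≤ (2 - √2) * x ^ 2 := by nlinarith
  have : √2 * z ≤ √2 * ((√2 - 1) * x) := by nlinarith
  exact le_of_mul_le_mul_left this (by positivity)

lemma two_sub_sqrt_two_mul_sq_add_le_sq {x y z : ℝ} (hx : 0 < x) (hy : 0 ≤ y) (hz : 0 ≤ z)
    (hxy : 2 * x * y ≤ (2 - √2) * x ^ 2) (hxz : 2 * x * z ≤ (2 - √2) * x ^ 2 + 2 * y * z) :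
    (2 - √2) * x ^ 2 + 2 * y * z + z ^ 2 ≤ x ^ 2 := by
  have hzx := le_sqrt_two_sub_one_mul hx hz hxy hxz
  have hyx : 2 * y ≤ (2 - √2) * x := le_of_mul_le_mul_left (by linarith) hx
  have hc : 0 ≤ (2 - √2) * x := by linarith
  calc (2 - √2) * x ^ 2 + 2 * y * z + z ^ 2
      ≤ (2 - √2) * x ^ 2 + (2 - √2) * x * ((√2 - 1) * x) + ((√2 - 1) * x) ^ 2 := by
        gcongr
    _ = x ^ 2 := by ring

open Real in
lemma norm_sub_add_le_of_separated_of_tangent {E : Type*} [SeminormedAddCommGroup E]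
    {a₁ a₂ a : E} {ρ₁ ρ₂ ρ : ℝ} (hρ₁ : 0 < ρ₁) (hρ : 0 ≤ ρ)
    (hclose : ‖a₁ - a₂‖ ≤ (2 - √2) * ρ₁) (hsep₁₂ : 2 * √(ρ₁ * ρ₂) ≤ ‖a₁ - a₂‖)
    (htan : ‖a₂ - a‖ = 2 * √(ρ₂ * ρ)) (hsep₁ : 2 * √(ρ₁ * ρ) ≤ ‖a₁ - a‖) :
    ‖a - a₁‖ + ρ ≤ ρ₁ := by
  rw [sqrt_mul hρ₁.le] at hsep₁₂ hsep₁
  rw [sqrt_mul' _ hρ] at htan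
  rw [← sq_sqrt hρ₁.le] at hclose ⊢
  rw [← sq_sqrt hρ]
  have htri : ‖a₁ - a‖ ≤ ‖a₁ - a₂‖ + ‖a₂ - a‖ := norm_sub_le_norm_sub_add_norm_sub _ _ _
  have key := two_sub_sqrt_two_mul_sq_add_le_sq (sqrt_pos.2 hρ₁) (sqrt_nonneg ρ₂) (sqrt_nonneg ρ)
    (by linarith) (by linarith)
  rw [norm_sub_rev]
  linarith

theorem ford_sphere_projection_nested_general (a₁ a₂ a : ℂ) (ρ₁ ρ₂ ρ : ℝ)
    (hρ₁ : 0 < ρ₁) (hρ : 0 < ρ)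
    (hclose : ‖a₁ - a₂‖ ≤ (2 - Real.sqrt 2) * ρ₁)
    (hsep : 2 * Real.sqrt (ρ₁ * ρ₂) ≤ ‖a₁ - a₂‖)
    (htan : ‖a₂ - a‖ = 2 * Real.sqrt (ρ₂ * ρ))
    (hG : (a = a₁ ∧ ρ = ρ₁) ∨ 2 * Real.sqrt (ρ₁ * ρ) ≤ ‖a₁ - a‖) :
    ‖a - a₁‖ + ρ ≤ ρ₁ ∧
      Metric.closedBall a ρ ⊆ Metric.closedBall a₁ ρ₁ := by
  have key : ‖a - a₁‖ + ρ ≤ ρ₁ := by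
    rcases hG with ⟨rfl, rfl⟩ | hsep₁
    · simp
    · exact norm_sub_add_le_of_separated_of_tangent hρ₁ hρ.le hclose hsep htan hsep₁
  refine ⟨key, Metric.closedBall_subset_closedBall' ?_⟩
  rwa [dist_eq_norm, add_comm]

/-- Let `a₁, a₂, a ∈ ℂ` and `ρ₁ > ρ₂ > 0`, `ρ > 0`, with
`|a₁ − a₂| ≤ (2 − √2)ρ₁`; suppose the Ford spheres at `a₁, a₂` of radii
`ρ₁, ρ₂` do not overlap (`|a₁ − a₂| ≥ 2√(ρ₁ρ₂)`), the sphere at `a` of radius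
`ρ` is tangent to the one at `a₂` (`|a₂ − a| = 2√(ρ₂ρ)`), and either
`(a, ρ) = (a₁, ρ₁)` or the spheres at `a` and `a₁` do not overlap
(`|a₁ − a| ≥ 2√(ρ₁ρ)`). Then `|a − a₁| + ρ ≤ ρ₁`; equivalently, the closed disk
of radius `ρ` centered at `a` (the vertical projection of the sphere at `a`)
is contained in the closed disk of radius `ρ₁` centered at `a₁`. -/
theorem ford_sphere_projection_nested (a₁ a₂ a : ℂ) (ρ₁ ρ₂ ρ : ℝ)
    (hρ₁ : 0 < ρ₁) (hρ₂ : 0 < ρ₂) (hρ : 0 < ρ) (h21 : ρ₂ < ρ₁)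
    (hclose : ‖a₁ - a₂‖ ≤ (2 - Real.sqrt 2) * ρ₁)
    (hsep : 2 * Real.sqrt (ρ₁ * ρ₂) ≤ ‖a₁ - a₂‖)
    (htan : ‖a₂ - a‖ = 2 * Real.sqrt (ρ₂ * ρ))
    (hG : (a = a₁ ∧ ρ = ρ₁) ∨ 2 * Real.sqrt (ρ₁ * ρ) ≤ ‖a₁ - a‖) :
    ‖a - a₁‖ + ρ ≤ ρ₁ ∧
      Metric.closedBall a ρ ⊆ Metric.closedBall a₁ ρ₁ :=
  ford_sphere_projection_nested_general a₁ a₂ a ρ₁ ρ₂ ρ hρ₁ hρ hclose hsep htan hG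
end
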